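/- arXiv:1205.5781 — 5 statements merged into one kernel-verified Lean document; each statement's English description precedes it below -/
import Mathlib

section
/- Let R be a commutative ring and let a, b, c be units of R. Then the matrices satisfy the colored braid relation (the matrix verification of the Reidemeister III move for the representation φ of the colored braid algebra on three strands): M1(b,c) · M2(a,c) · M1(a,b) = M2(a,b) · M1(a,c) · M2(b,c), where in each product the left factor corresponds to the top crossing of the braid word and the colors are those carried by the two strands entering each crossing when the three strands are colored a, b, c from left to right along the bottom. -/
open Matrix

/-- The 8×8 matrix assigned by Kennedy's representation φ to the positive
colored braid generator σ1, where `x` is the color of the first strand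
entering the crossing and `y` is the color of the second. -/
def M1 {R : Type*} [CommRing R] (x y : Rˣ) : Matrix (Fin 8) (Fin 8) R :=
  !![(x : R), 0, 0, 0, 0, 0, 0, 0;
     0, 0, ((x⁻¹ : Rˣ) : R), 0, 0, 0, 0, 0;
     0, (x : R), (y : R) - ((y⁻¹ : Rˣ) : R), 0, 0, 0, 0, 0;
     0, 0, 0, (x : R), 0, 0, 0, 0;
     0, 0, 0, 0, (y : R) - ((y⁻¹ : Rˣ) : R), (x : R), 0, 0;
     0, 0, 0, 0, ((x⁻¹ : Rˣ) : R), 0, 0, 0;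
     0, 0, 0, 0, 0, 0, -((x⁻¹ : Rˣ) : R), 0;
     0, 0, 0, 0, 0, 0, 0, -((x⁻¹ : Rˣ) : R)]

/-- The 8×8 matrix assigned by Kennedy's representation φ to the positive
colored braid generator σ2, where `x` is the color of the first strand
entering the crossing and `y` is the color of the second. -/
def M2 {R : Type*} [CommRing R] (x y : Rˣ) : Matrix (Fin 8) (Fin 8) R :=
  !![(x : R), 0, 0, 0, 0, 0, 0, 0;
     0, (x : R), 0, 0, 0, 0, 0, 0;
     0, 0, 0, ((x⁻¹ : Rˣ) : R), 0, 0, 0, 0;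
     0, 0, (x : R), (y : R) - ((y⁻¹ : Rˣ) : R), 0, 0, 0, 0;
     0, 0, 0, 0, -((x⁻¹ : Rˣ) : R), 0, 0, 0;
     0, 0, 0, 0, 0, (y : R) - ((y⁻¹ : Rˣ) : R), (x : R), 0;
     0, 0, 0, 0, 0, ((x⁻¹ : Rˣ) : R), 0, 0;
     0, 0, 0, 0, 0, 0, 0, -((x⁻¹ : Rˣ) : R)]

/-!
Both `M1 x y` and `M2 x y` preserve the splitting of `R⁸` into the spans of the first four and
the last four basis vectors, so the 8×8 relation splits into two 4×4 relations. Each of these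
is a direct computation whose only non-trivial cancellation is `b = b⁻¹ + (b - b⁻¹)`, the one place
where the diagonal entry `y - y⁻¹` of the generators matters.
-/

section Blocks

variable {R : Type*} [CommRing R]

def M1Upper (x y : Rˣ) : Matrix (Fin 4) (Fin 4) R :=
  !![(x : R), 0, 0, 0;
     0, 0, ((x⁻¹ : Rˣ) : R), 0;
     0, (x : R), (y : R) - ((y⁻¹ : Rˣ) : R), 0;
     0, 0, 0, (x : R)]

def M1Lower (x y : Rˣ) : Matrix (Fin 4) (Fin 4) R :=
  !![(y : R) - ((y⁻¹ : Rˣ) : R), (x : R), 0, 0;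
     ((x⁻¹ : Rˣ) : R), 0, 0, 0;
     0, 0, -((x⁻¹ : Rˣ) : R), 0;
     0, 0, 0, -((x⁻¹ : Rˣ) : R)]

def M2Upper (x y : Rˣ) : Matrix (Fin 4) (Fin 4) R :=
  !![(x : R), 0, 0, 0;
     0, (x : R), 0, 0;
     0, 0, 0, ((x⁻¹ : Rˣ) : R);
     0, 0, (x : R), (y : R) - ((y⁻¹ : Rˣ) : R)]

def M2Lower (x y : Rˣ) : Matrix (Fin 4) (Fin 4) R :=
  !![-((x⁻¹ : Rˣ) : R), 0, 0, 0;
     0, (y : R) - ((y⁻¹ : Rˣ) : R), (x : R), 0;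
     0, ((x⁻¹ : Rˣ) : R), 0, 0;
     0, 0, 0, -((x⁻¹ : Rˣ) : R)]

theorem M1_eq_submatrix_fromBlocks (x y : Rˣ) :
    M1 x y = (fromBlocks (M1Upper x y) 0 0 (M1Lower x y)).submatrix
      finSumFinEquiv.symm finSumFinEquiv.symm := by
  ext i j
  fin_cases i <;> fin_cases j <;> rfl

theorem M2_eq_submatrix_fromBlocks (x y : Rˣ) :
    M2 x y = (fromBlocks (M2Upper x y) 0 0 (M2Lower x y)).submatrix
      finSumFinEquiv.symm finSumFinEquiv.symm := by
  ext i j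
  fin_cases i <;> fin_cases j <;> rfl

theorem colored_braid_relation_upper (a b c : Rˣ) :
    M1Upper b c * M2Upper a c * M1Upper a b = M2Upper a b * M1Upper a c * M2Upper b c := by
  ext i j
  fin_cases i <;> fin_cases j <;>
    simp [M1Upper, M2Upper, mul_apply, Fin.sum_univ_four] <;> ring

theorem colored_braid_relation_lower (a b c : Rˣ) :
    M1Lower b c * M2Lower a c * M1Lower a b = M2Lower a b * M1Lower a c * M2Lower b c := by
  ext i j
  fin_cases i <;> fin_cases j <;>
    simp [M1Lower, M2Lower, mul_apply, Fin.sum_univ_four] <;> ring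

end Blocks

/-- The colored braid relation (matrix form of Reidemeister III) for the
representation φ: with bottom strands colored `a`, `b`, `c` from left to
right, `φ(σ1σ2σ1) = φ(σ2σ1σ2)`, the left factor of each product being the
top crossing. -/
theorem colored_braid_relation {R : Type*} [CommRing R] (a b c : Rˣ) :
    M1 b c * M2 a c * M1 a b = M2 a b * M1 a c * M2 b c := by
  simp only [M1_eq_submatrix_fromBlocks, M2_eq_submatrix_fromBlocks, submatrix_mul_equiv,
    fromBlocks_multiply, zero_mul, mul_zero, add_zero, zero_add]
  rw [colored_braid_relation_upper, colored_braid_relation_lower]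
end

section
/- Let R be a commutative ring and let q be a unit of R. Then the matrix M1(q,q) satisfies the single-variable Alexander skein relation for two strands of the same color: M1(q,q)² = (q − q⁻¹)·M1(q,q) + I₈, where I₈ is the 8×8 identity matrix; equivalently, the matrix of the positive crossing minus the matrix of the negative crossing (the inverse of M1(q,q)) equals (q − q⁻¹) times the identity. -/
/-
On the blocks {2,3} and {5,6}, M1(x,y) is a 2×2 matrix of trace y - y⁻¹ and determinant -1,
so by Cayley–Hamilton it satisfies t² = (y - y⁻¹)t + 1 for every x. The remaining diagonal
entries are x, x, -x⁻¹, -x⁻¹; since the roots of t² - st - 1 have product -1, these satisfy the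
same relation as soon as x does, and for x = y = q it reduces to q q⁻¹ = 1.
-/

open Matrix

theorem Units.neg_inv_sq_eq_of_sq_eq {R : Type*} [CommRing R] (a : Rˣ) {s : R}
    (h : (a : R) ^ 2 = s * a + 1) :
    (-((a⁻¹ : Rˣ) : R)) ^ 2 = s * -((a⁻¹ : Rˣ) : R) + 1 := by
  linear_combination (-((a⁻¹ : Rˣ) : R) ^ 2) * h
    + ((a⁻¹ : Rˣ) * (a : R) + 1 - s * (a⁻¹ : Rˣ)) * a.inv_mul

theorem M1_mul_self_of_sq_eq {R : Type*} [CommRing R] (x y : Rˣ)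
    (h : (x : R) ^ 2 = ((y : R) - ((y⁻¹ : Rˣ) : R)) * x + 1) :
    M1 x y * M1 x y = ((y : R) - ((y⁻¹ : Rˣ) : R)) • M1 x y + 1 := by
  have h_neg_inv := x.neg_inv_sq_eq_of_sq_eq h
  ext i j
  fin_cases i <;> fin_cases j <;>
    simp [M1, mul_apply, Fin.sum_univ_eight, one_apply] <;>
    first | ring1 | linear_combination h | linear_combination h_neg_inv

/-- The single-variable Alexander skein relation for two strands of the same
color `q`: `M1(q,q)² = (q − q⁻¹)·M1(q,q) + I₈`. -/
theorem skein_relation_M1 {R : Type*} [CommRing R] (q : Rˣ) :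
    M1 q q * M1 q q
      = ((q : R) - ((q⁻¹ : Rˣ) : R)) • M1 q q + (1 : Matrix (Fin 8) (Fin 8) R) :=
  M1_mul_self_of_sq_eq q q (by linear_combination q.mul_inv)
end

section
/- Let R be a commutative ring and let q be a unit of R. Then the matrix M2(q,q) satisfies the single-variable Alexander skein relation for two strands of the same color: M2(q,q)² = (q − q⁻¹)·M2(q,q) + I₈, where I₈ is the 8×8 identity matrix. -/
open Matrix

/-! In the basis v₁,…,v₈ the matrix `M2 q q` is block diagonal: its 1×1 blocks are `q` and `-q⁻¹`,
the roots of `t² - (q - q⁻¹) t - 1`, and its two 2×2 blocks have trace `q - q⁻¹` and determinant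
`-1`, so every block satisfies the relation by Cayley–Hamilton. Treating `q⁻¹` as an independent
variable `b`, the same computation is the polynomial identity `M² = (q - b) M + q b`, which
specialises to the skein relation because `q q⁻¹ = 1`. -/

def genericM2 {R : Type*} [CommRing R] (a b : R) : Matrix (Fin 8) (Fin 8) R :=
  !![a, 0, 0, 0, 0, 0, 0, 0;
     0, a, 0, 0, 0, 0, 0, 0;
     0, 0, 0, b, 0, 0, 0, 0;
     0, 0, a, a - b, 0, 0, 0, 0;
     0, 0, 0, 0, -b, 0, 0, 0;
     0, 0, 0, 0, 0, a - b, a, 0;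
     0, 0, 0, 0, 0, b, 0, 0;
     0, 0, 0, 0, 0, 0, 0, -b]

theorem M2_self_eq_genericM2 {R : Type*} [CommRing R] (q : Rˣ) :
    M2 q q = genericM2 (q : R) ((q⁻¹ : Rˣ) : R) := rfl

theorem genericM2_mul_self {R : Type*} [CommRing R] (a b : R) :
    genericM2 a b * genericM2 a b = (a - b) • genericM2 a b + (a * b) • 1 := by
  ext i j
  fin_cases i <;> fin_cases j <;> simp [genericM2, mul_apply, Fin.sum_univ_eight, one_apply] <;> ring

/-- The single-variable Alexander skein relation for two strands of the same
color `q`: `M2(q,q)² = (q − q⁻¹)·M2(q,q) + I₈`. -/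
theorem skein_relation_M2 {R : Type*} [CommRing R] (q : Rˣ) :
    M2 q q * M2 q q
      = ((q : R) - ((q⁻¹ : Rˣ) : R)) • M2 q q + (1 : Matrix (Fin 8) (Fin 8) R) := by
  rw [M2_self_eq_genericM2, genericM2_mul_self, Units.mul_inv, one_smul]
end

section
/- Let R be a commutative ring and let a, b be units of R. Let X = M1(b,a)·M1(a,b) be the image under the representation φ of the full twist σ1² on two adjacent strands colored a and b (bottom colors a, b). Then Murakami's second axiom holds in the representation: X² + I₈ = (ab + a⁻¹b⁻¹)·X, where I₈ is the 8×8 identity matrix; equivalently, the images of the double positive twist and the double negative twist sum to (ab + a⁻¹b⁻¹) times the identity. -/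
/-!
In the basis v₁, …, v₈, φ(σ₁) preserves the decomposition
⟨v₂, v₃⟩ ⊕ ⟨v₅, v₆⟩ ⊕ ⟨v₁, v₄⟩ ⊕ ⟨v₇, v₈⟩ and acts by scalars on the last two summands, so
X = φ(σ₁²) is block diagonal as well and the relation can be checked block by block. On the
scalar blocks X acts by ab and a⁻¹b⁻¹, the two roots of z² - (ab + a⁻¹b⁻¹)z + 1. On each
two-dimensional block X is a product of two matrices of determinant -1 and has trace
ab + a⁻¹b⁻¹, so the relation is its Cayley–Hamilton identity.
-/

open Matrix

namespace Matrix

theorem mul_self_add_det_smul_one_fin_two {R : Type*} [CommRing R]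
    (A : Matrix (Fin 2) (Fin 2) R) : A * A + A.det • (1 : Matrix (Fin 2) (Fin 2) R) = A.trace • A := by
  rw [eta_fin_two A]
  ext i j
  fin_cases i <;> fin_cases j <;> simp [det_fin_two, trace_fin_two] <;> ring

theorem smul_one_mul_self_add_one {R n : Type*} [CommRing R] [Fintype n] [DecidableEq n]
    {c t : R} (h : c * c + 1 = t * c) :
    (c • 1 : Matrix n n R) * (c • 1) + 1 = t • (c • 1 : Matrix n n R) := by
  rw [smul_mul_smul_comm, one_mul, smul_smul, ← h, add_smul, one_smul]

theorem submatrix_blockDiagonal_mul_self_add_one {R m n o : Type*} [CommRing R]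
    [Fintype m] [DecidableEq m] [Fintype n] [DecidableEq n] [Fintype o] [DecidableEq o]
    (e : n ≃ m × o) (Y : o → Matrix m m R) (t : R) (hY : Y * Y + 1 = t • Y) :
    (blockDiagonal Y).submatrix e e * (blockDiagonal Y).submatrix e e + 1
      = t • (blockDiagonal Y).submatrix e e := by
  calc _ = (blockDiagonal (Y * Y + 1)).submatrix e e := by
        rw [blockDiagonal_add, blockDiagonal_one, submatrix_add, Pi.add_apply, Pi.add_apply,
          submatrix_one_equiv, submatrix_mul_equiv, ← blockDiagonal_mul]
        rfl
    _ = _ := by rw [hY, blockDiagonal_smul, submatrix_smul]; rfl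

end Matrix

namespace Units

variable {R : Type*} [CommRing R] (u : Rˣ)

theorem mul_self_add_one_eq_add_inv_mul : (u : R) * u + 1 = ((u : R) + ((u⁻¹ : Rˣ) : R)) * u := by
  rw [add_mul, Units.inv_mul]

theorem inv_mul_self_add_one_eq_add_inv_mul :
    ((u⁻¹ : Rˣ) : R) * ((u⁻¹ : Rˣ) : R) + 1 = ((u : R) + ((u⁻¹ : Rˣ) : R)) * ((u⁻¹ : Rˣ) : R) := by
  rw [add_mul, Units.mul_inv, add_comm]

end Units

/-- The basis index `i` (0-based, so `i` stands for `v_{i+1}`) becomes position `(r, k)`: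
row `r` of the `k`-th block in `M1Blocks`. -/
def twistPairing : Fin 8 ≃ Fin 2 × Fin 4 where
  toFun := ![(0, 2), (0, 0), (1, 0), (1, 2), (0, 1), (1, 1), (0, 3), (1, 3)]
  invFun p := ![![1, 4, 0, 6], ![2, 5, 3, 7]] p.1 p.2
  left_inv := by decide
  right_inv := by decide

def M1Blocks {R : Type*} [CommRing R] (x y : Rˣ) : Fin 4 → Matrix (Fin 2) (Fin 2) R
  | 0 => !![0, ((x⁻¹ : Rˣ) : R); (x : R), (y : R) - ((y⁻¹ : Rˣ) : R)]
  | 1 => !![(y : R) - ((y⁻¹ : Rˣ) : R), (x : R); ((x⁻¹ : Rˣ) : R), 0]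
  | 2 => (x : R) • 1
  | 3 => -((x⁻¹ : Rˣ) : R) • 1

section M1Blocks

variable {R : Type*} [CommRing R]

theorem det_M1Blocks_zero (x y : Rˣ) : (M1Blocks x y 0).det = -1 := by
  simp [M1Blocks, det_fin_two_of]

theorem det_M1Blocks_one (x y : Rˣ) : (M1Blocks x y 1).det = -1 := by
  simp [M1Blocks, det_fin_two_of]

theorem M1_eq_submatrix_blockDiagonal (x y : Rˣ) :
    M1 x y = (blockDiagonal (M1Blocks x y)).submatrix twistPairing twistPairing := by
  ext i j
  rw [submatrix_apply, blockDiagonal_apply]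
  fin_cases i <;> fin_cases j <;> simp [M1, M1Blocks, twistPairing]

theorem M1_mul_M1_eq_submatrix_blockDiagonal (x y z w : Rˣ) :
    M1 x y * M1 z w
      = (blockDiagonal (M1Blocks x y * M1Blocks z w)).submatrix twistPairing twistPairing := by
  rw [M1_eq_submatrix_blockDiagonal, M1_eq_submatrix_blockDiagonal, submatrix_mul_equiv,
    ← blockDiagonal_mul]
  rfl

theorem M1Blocks_fullTwist_mul_self_add_one (a b : Rˣ) :
    let Y := M1Blocks b a * M1Blocks a b
    Y * Y + 1 = ((a : R) * (b : R) + ((a⁻¹ : Rˣ) : R) * ((b⁻¹ : Rˣ) : R)) • Y := by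
  intro Y
  have ht : (a : R) * (b : R) + ((a⁻¹ : Rˣ) : R) * ((b⁻¹ : Rˣ) : R)
      = ((a * b : Rˣ) : R) + (((a * b)⁻¹ : Rˣ) : R) := by
    simp [mul_comm]
  funext k
  fin_cases k
  · have hdet : (Y 0).det = 1 := by simp [Y, det_mul, det_M1Blocks_zero]
    have htr : (Y 0).trace = (a : R) * (b : R) + ((a⁻¹ : Rˣ) : R) * ((b⁻¹ : Rˣ) : R) := by
      simp [Y, M1Blocks, trace_fin_two]
      ring
    simpa [hdet, htr] using mul_self_add_det_smul_one_fin_two (Y 0)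
  · have hdet : (Y 1).det = 1 := by simp [Y, det_mul, det_M1Blocks_one]
    have htr : (Y 1).trace = (a : R) * (b : R) + ((a⁻¹ : Rˣ) : R) * ((b⁻¹ : Rˣ) : R) := by
      simp [Y, M1Blocks, trace_fin_two]
      ring
    simpa [hdet, htr] using mul_self_add_det_smul_one_fin_two (Y 1)
  · have hY : Y 2 = ((a * b : Rˣ) : R) • 1 := by simp [Y, M1Blocks, smul_smul]
    simpa [hY, ht] using
      smul_one_mul_self_add_one (Units.mul_self_add_one_eq_add_inv_mul (a * b))
  · have hY : Y 3 = (((a * b)⁻¹ : Rˣ) : R) • 1 := by simp [Y, M1Blocks, smul_smul, mul_comm]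
    simpa [hY, ht] using
      smul_one_mul_self_add_one (Units.inv_mul_self_add_one_eq_add_inv_mul (a * b))

end M1Blocks

/-- Murakami's second axiom in the representation φ for the full twist on the
first two strands, colored `a` and `b`: with `X = M1(b,a)·M1(a,b)`,
`X² + I₈ = (ab + a⁻¹b⁻¹)·X`. -/
theorem murakami_second_axiom_sigma1 {R : Type*} [CommRing R] (a b : Rˣ) :
    let X : Matrix (Fin 8) (Fin 8) R := M1 b a * M1 a b
    X * X + (1 : Matrix (Fin 8) (Fin 8) R)
      = ((a : R) * (b : R) + ((a⁻¹ : Rˣ) : R) * ((b⁻¹ : Rˣ) : R)) • X := by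
  intro X
  rw [show X = _ from M1_mul_M1_eq_submatrix_blockDiagonal b a a b]
  exact submatrix_blockDiagonal_mul_self_add_one twistPairing _ _
    (M1Blocks_fullTwist_mul_self_add_one a b)
end

section
/- Let R be a commutative ring and let b, c be units of R. Let Y = M2(c,b)·M2(b,c) be the image under the representation φ of the full twist σ2² on two adjacent strands colored b and c (bottom colors b, c in positions two and three). Then Murakami's second axiom holds in the representation: Y² + I₈ = (bc + b⁻¹c⁻¹)·Y, where I₈ is the 8×8 identity matrix. -/
open Matrix

/-!
Reorder the basis v₁, …, v₈ as the pairs (v₁, v₂), (v₃, v₄), (v₅, v₈), (v₇, v₆). Then every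
σ₂-matrix M2(x, y) is block diagonal with 2×2 blocks x·I, B(x, y), −x⁻¹·I, B(x, y), where
B(x, y) = [[0, x⁻¹], [x, y − y⁻¹]], so it suffices to check Z² + I = t·Z, t = bc + b⁻¹c⁻¹, for each
block Z of the full twist. The scalar blocks are bc·I and b⁻¹c⁻¹·I, and bc, b⁻¹c⁻¹ are the two
roots of λ² − tλ + 1. The block B(c, b)·B(b, c) has determinant (−1)² = 1 and trace t, so there
the identity is the Cayley–Hamilton theorem for 2×2 matrices.
-/

namespace Matrix

variable {R : Type*} [CommRing R]

theorem mul_self_add_det_smul_one_eq_trace_smul (Z : Matrix (Fin 2) (Fin 2) R) :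
    Z * Z + Z.det • (1 : Matrix (Fin 2) (Fin 2) R) = Z.trace • Z := by
  ext i j
  fin_cases i <;> fin_cases j <;>
    simp only [Matrix.add_apply, mul_apply, Matrix.smul_apply, one_apply, Fin.sum_univ_two,
      trace_fin_two, det_fin_two, smul_eq_mul, Fin.isValue, Fin.zero_eta, Fin.mk_one, zero_ne_one,
      one_ne_zero, ↓reduceIte] <;> ring

theorem diagonal_const_mul_self_add_one {n : Type*} [Fintype n] [DecidableEq n] {l m t : R}
    (hlm : l * m = 1) (ht : l + m = t) :
    diagonal (fun _ : n => l) * diagonal (fun _ => l) + 1 = t • diagonal (fun _ => l) := by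
  rw [diagonal_mul_diagonal, ← diagonal_one, diagonal_add, ← diagonal_smul]
  congr 1
  funext
  simp only [Pi.smul_apply, smul_eq_mul, ← ht]
  linear_combination -hlm

end Matrix

section

variable {R : Type*} [CommRing R]

def crossingBlock (x y : Rˣ) : Matrix (Fin 2) (Fin 2) R :=
  !![0, ((x⁻¹ : Rˣ) : R); (x : R), (y : R) - ((y⁻¹ : Rˣ) : R)]

def M2Blocks (x y : Rˣ) : Fin 4 → Matrix (Fin 2) (Fin 2) R :=
  ![diagonal fun _ => (x : R), crossingBlock x y, diagonal fun _ => -((x⁻¹ : Rˣ) : R),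
    crossingBlock x y]

def M2Index : Fin 8 ≃ Fin 2 × Fin 4 where
  toFun := ![(0, 0), (1, 0), (0, 1), (1, 1), (0, 2), (1, 3), (0, 3), (1, 2)]
  invFun p := ![![0, 2, 4, 6], ![1, 3, 7, 5]] p.1 p.2
  left_inv := by decide
  right_inv := by decide

theorem M2_eq_reindex_blockDiagonal (x y : Rˣ) :
    M2 x y = reindexAlgEquiv R R M2Index.symm (blockDiagonal (M2Blocks x y)) := by
  ext i j
  fin_cases i <;> fin_cases j <;> rfl

theorem det_crossingBlock (x y : Rˣ) : (crossingBlock x y).det = -1 := by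
  rw [crossingBlock, det_fin_two_of, zero_mul, Units.inv_mul, zero_sub]

theorem trace_crossingBlock_mul (b c : Rˣ) :
    (crossingBlock c b * crossingBlock b c).trace
      = (b : R) * c + ((b⁻¹ : Rˣ) : R) * ((c⁻¹ : Rˣ) : R) := by
  rw [crossingBlock, crossingBlock, mul_fin_two, trace_fin_two_of]
  ring

theorem crossingBlock_fullTwist_mul_self_add_one (b c : Rˣ) :
    let Z := crossingBlock c b * crossingBlock b c
    Z * Z + 1 = ((b : R) * c + ((b⁻¹ : Rˣ) : R) * ((c⁻¹ : Rˣ) : R)) • Z := by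
  intro Z
  have h := Z.mul_self_add_det_smul_one_eq_trace_smul
  rwa [det_mul, det_crossingBlock, det_crossingBlock, neg_one_mul, neg_neg, one_smul,
    trace_crossingBlock_mul] at h

theorem M2Blocks_fullTwist_mul_self_add_one (b c : Rˣ) (k : Fin 4) :
    let Z := M2Blocks c b k * M2Blocks b c k
    Z * Z + 1 = ((b : R) * c + ((b⁻¹ : Rˣ) : R) * ((c⁻¹ : Rˣ) : R)) • Z := by
  have hb := b.mul_inv
  have hc := c.mul_inv
  fin_cases k <;> intro Z
  · have hZ : Z = diagonal fun _ => (c : R) * b := diagonal_mul_diagonal _ _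
    rw [hZ]
    exact diagonal_const_mul_self_add_one (m := ((b⁻¹ : Rˣ) : R) * ((c⁻¹ : Rˣ) : R))
      (by linear_combination (c : R) * ((c⁻¹ : Rˣ) : R) * hb + hc) (by ring)
  · exact crossingBlock_fullTwist_mul_self_add_one b c
  · have hZ : Z = diagonal fun _ => ((c⁻¹ : Rˣ) : R) * ((b⁻¹ : Rˣ) : R) :=
      (diagonal_mul_diagonal _ _).trans (congrArg diagonal (funext fun _ => neg_mul_neg _ _))
    rw [hZ]
    exact diagonal_const_mul_self_add_one (m := (b : R) * c)
      (by linear_combination ((c⁻¹ : Rˣ) : R) * (c : R) * hb + hc) (by ring)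
  · exact crossingBlock_fullTwist_mul_self_add_one b c

end

/-- Murakami's second axiom in the representation φ for the full twist on the
second and third strands, colored `b` and `c`: with `Y = M2(c,b)·M2(b,c)`,
`Y² + I₈ = (bc + b⁻¹c⁻¹)·Y`. -/
theorem murakami_second_axiom_sigma2 {R : Type*} [CommRing R] (b c : Rˣ) :
    let Y : Matrix (Fin 8) (Fin 8) R := M2 c b * M2 b c
    Y * Y + (1 : Matrix (Fin 8) (Fin 8) R)
      = ((b : R) * (c : R) + ((b⁻¹ : Rˣ) : R) * ((c⁻¹ : Rˣ) : R)) • Y := by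
  intro Y
  have hY : Y = reindexAlgEquiv R R M2Index.symm
      (blockDiagonal fun k => M2Blocks c b k * M2Blocks b c k) := by
    simp only [Y]
    rw [M2_eq_reindex_blockDiagonal, M2_eq_reindex_blockDiagonal, ← map_mul, blockDiagonal_mul]
  rw [hY, ← map_mul, ← map_one (reindexAlgEquiv R R M2Index.symm), ← map_add, ← map_smul,
    ← blockDiagonal_mul, ← blockDiagonal_one, ← blockDiagonal_add, ← blockDiagonal_smul]
  congr 2
  funext k
  exact M2Blocks_fullTwist_mul_self_add_one b c k
end
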